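/- The algebra B_q(s,t,φ) is generated as an F-algebra by the elements E, F, K, K⁻¹ alone (C_s and C_t lie in the subalgebra generated by E, F, K^{±1}). -/

import Mathlib

open LaurentPolynomial

noncomputable section

/-- The Laurent polynomial `ψ(c·λ)`. -/
noncomputable def lscale {F : Type*} [Field F] (c : F) (ψ : LaurentPolynomial F) :
    LaurentPolynomial F :=
  Finsupp.sum ψ.coeff fun i a => (a * c ^ i) • (T i : LaurentPolynomial F)

/-- The map `ψ ↦ ψ_{s,t}` of Definition 2.4:
`ψ_{s,t}(λ) = ψ(q⁻¹λ) − (q^{−2s}+q^{−2t})ψ(qλ) + q^{−2s−2t}ψ(q³λ)`. -/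
noncomputable def adu {F : Type*} [Field F] (q : F) (s t : ℤ) (ψ : LaurentPolynomial F) :
    LaurentPolynomial F :=
  lscale q⁻¹ ψ - (q ^ (-2*s) + q ^ (-2*t)) • lscale q ψ + q ^ (-2*s-2*t) • lscale (q^3) ψ

/-- `F[λ,λ⁻¹]_{s,t}`: the span of the monomials `λ^i`, `i ∉ {s,t}`. -/
noncomputable def lstSpan (F : Type*) [Field F] (s t : ℤ) :
    Submodule F (LaurentPolynomial F) :=
  Submodule.span F {ψ : LaurentPolynomial F | ∃ i : ℤ, i ≠ s ∧ i ≠ t ∧ ψ = T i}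

/-- `x^i` for `i : ℤ`, interpreting negative powers via a designated inverse `y`. -/
def zpow2 {B : Type*} [Monoid B] (x y : B) (i : ℤ) : B :=
  if 0 ≤ i then x ^ i.toNat else y ^ (-i).toNat

/-- Evaluation `ψ(c·x)` of a Laurent polynomial `ψ`, where `y` plays the role of `x⁻¹`. -/
noncomputable def leval {F : Type*} [Field F] {B : Type*} [Ring B] [Algebra F B]
    (ψ : LaurentPolynomial F) (c : F) (x y : B) : B :=
  Finsupp.sum ψ.coeff fun i a => (a * c ^ i) • zpow2 x y i

inductive BGen | cs | ct | e | f | k | kinv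
deriving DecidableEq

open FreeAlgebra in
/-- Defining relations for `B_q(s,t,φ)`. -/
inductive BRel {F : Type*} [Field F] (q : F) (s t : ℤ) (φ : LaurentPolynomial F) :
    FreeAlgebra F BGen → FreeAlgebra F BGen → Prop
  | csCentral (x) : BRel q s t φ (ι F BGen.cs * x) (x * ι F BGen.cs)
  | ctCentral (x) : BRel q s t φ (ι F BGen.ct * x) (x * ι F BGen.ct)
  | kkinv : BRel q s t φ (ι F BGen.k * ι F BGen.kinv) 1
  | kinvk : BRel q s t φ (ι F BGen.kinv * ι F BGen.k) 1
  | ke : BRel q s t φ (ι F BGen.k * ι F BGen.e) (q ^ 2 • (ι F BGen.e * ι F BGen.k))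
  | kf : BRel q s t φ (ι F BGen.k * ι F BGen.f) ((q ^ 2)⁻¹ • (ι F BGen.f * ι F BGen.k))
  | fe : BRel q s t φ (ι F BGen.f * ι F BGen.e)
      (q ^ s • (ι F BGen.cs * zpow2 (ι F BGen.k) (ι F BGen.kinv) s)
        + q ^ t • (ι F BGen.ct * zpow2 (ι F BGen.k) (ι F BGen.kinv) t)
        + leval φ q (ι F BGen.k) (ι F BGen.kinv))
  | ef : BRel q s t φ (ι F BGen.e * ι F BGen.f)
      (q ^ (-s) • (ι F BGen.cs * zpow2 (ι F BGen.k) (ι F BGen.kinv) s)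
        + q ^ (-t) • (ι F BGen.ct * zpow2 (ι F BGen.k) (ι F BGen.kinv) t)
        + leval φ q⁻¹ (ι F BGen.k) (ι F BGen.kinv))

/-- The algebra `B_q(s,t,φ)`. -/
def BAlg {F : Type*} [Field F] (q : F) (s t : ℤ) (φ : LaurentPolynomial F) : Type _ :=
  RingQuot (BRel q s t φ)

noncomputable instance {F : Type*} [Field F] (q : F) (s t : ℤ) (φ : LaurentPolynomial F) :
    Ring (BAlg q s t φ) := inferInstanceAs (Ring (RingQuot _))

noncomputable instance {F : Type*} [Field F] (q : F) (s t : ℤ) (φ : LaurentPolynomial F) :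
    Algebra F (BAlg q s t φ) := inferInstanceAs (Algebra F (RingQuot _))

/-- The images of the generators in `B_q(s,t,φ)`. -/
noncomputable def bgen {F : Type*} [Field F] (q : F) (s t : ℤ) (φ : LaurentPolynomial F)
    (g : BGen) : BAlg q s t φ :=
  RingQuot.mkAlgHom F (BRel q s t φ) (FreeAlgebra.ι F g)

/-!
Modulo Laurent polynomials in `K`, the relations write `FE` and `EF` as the combinations
`q^s X + q^t Y` and `q^{-s} X + q^{-t} Y` of `X = C_s K^s` and `Y = C_t K^t`. The determinant
`q^{s-t} - q^{t-s}` vanishes only if `q^{2(s-t)} = 1`, which is excluded because `q` is not a root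
of unity and `s ≠ t`. Hence `X` and `Y`, and with them `C_s = X K^{-s}` and `C_t = Y K^{-t}`, lie in
the subalgebra generated by `E, F, K^{±1}`.
-/


theorem Submodule.mem_of_smul_add_smul_mem {K M : Type*} [Field K] [AddCommGroup M] [Module K M]
    {p : Submodule K M} {α β γ δ : K} (hdet : α * δ - β * γ ≠ 0) {x y : M}
    (ha : α • x + β • y ∈ p) (hb : γ • x + δ • y ∈ p) : x ∈ p ∧ y ∈ p := by
  have hx : (α * δ - β * γ) • x = δ • (α • x + β • y) - β • (γ • x + δ • y) := by module
  have hy : (α * δ - β * γ) • y = α • (γ • x + δ • y) - γ • (α • x + β • y) := by module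
  refine ⟨(p.smul_mem_iff hdet).1 ?_, (p.smul_mem_iff hdet).1 ?_⟩
  · rw [hx]; exact p.sub_mem (p.smul_mem _ ha) (p.smul_mem _ hb)
  · rw [hy]; exact p.sub_mem (p.smul_mem _ hb) (p.smul_mem _ ha)

theorem zpow_ne_one_of_pow_ne_one {K : Type*} [DivisionRing K] {q : K}
    (hq : ∀ n : ℕ, 0 < n → q ^ n ≠ 1) {m : ℤ} (hm : m ≠ 0) : q ^ m ≠ 1 := by
  rcases Int.natAbs_eq m with h | h <;> rw [h]
  · rw [zpow_natCast]; exact hq _ (by omega)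
  · rw [zpow_neg, zpow_natCast, inv_ne_one]; exact hq _ (by omega)

theorem zpow_mul_zpow_neg_sub_ne_zero {K : Type*} [Field K] {q : K} (hq0 : q ≠ 0)
    (hq : ∀ n : ℕ, 0 < n → q ^ n ≠ 1) {s t : ℤ} (hst : s ≠ t) :
    q ^ s * q ^ (-t) - q ^ t * q ^ (-s) ≠ 0 := by
  intro h
  rw [sub_eq_zero, ← zpow_add₀ hq0, ← zpow_add₀ hq0] at h
  refine zpow_ne_one_of_pow_ne_one hq (m := 2 * (s - t)) (by omega) ?_
  calc q ^ (2 * (s - t)) = q ^ (s + -t) * (q ^ (t + -s))⁻¹ := by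
        rw [← zpow_neg, ← zpow_add₀ hq0]; ring_nf
    _ = 1 := by rw [h, mul_inv_cancel₀ (zpow_ne_zero _ hq0)]

section zpow2

variable {F : Type*} [Field F] {B C : Type*} [Ring B] [Ring C] [Algebra F B] [Algebra F C]

theorem map_zpow2 (f : B →ₐ[F] C) (x y : B) (i : ℤ) :
    f (zpow2 x y i) = zpow2 (f x) (f y) i := by
  unfold zpow2; split <;> simp only [map_pow]

theorem map_leval (f : B →ₐ[F] C) (ψ : LaurentPolynomial F) (c : F) (x y : B) :
    f (leval ψ c x y) = leval ψ c (f x) (f y) := by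
  rw [_root_.leval, map_finsuppSum]
  exact Finsupp.sum_congr fun i _ => by rw [map_smul, map_zpow2]

theorem zpow2_units (u : Bˣ) (i : ℤ) : zpow2 (u : B) (↑u⁻¹) i = ↑(u ^ i) := by
  unfold zpow2
  split
  next h =>
    rw [← Int.toNat_of_nonneg h, zpow_natCast, Units.val_pow_eq_pow_val, Int.toNat_natCast]
  next h =>
    rw [show i = -((-i).toNat : ℤ) by omega, zpow_neg, ← inv_zpow, zpow_natCast,
      Units.val_pow_eq_pow_val, neg_neg, Int.toNat_natCast]

theorem zpow2_mem {A : Subalgebra F B} {x y : B} (hx : x ∈ A) (hy : y ∈ A) (i : ℤ) :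
    zpow2 x y i ∈ A := by
  unfold zpow2; split
  · exact pow_mem hx _
  · exact pow_mem hy _

theorem leval_mem {A : Subalgebra F B} {x y : B} (hx : x ∈ A) (hy : y ∈ A)
    (ψ : LaurentPolynomial F) (c : F) : leval ψ c x y ∈ A :=
  Subalgebra.sum_mem _ fun i _ => Subalgebra.smul_mem _ (zpow2_mem hx hy i) _

theorem mem_of_mul_zpow2_mem {A : Subalgebra F B} {x y c : B} (hx : x ∈ A) (hy : y ∈ A)
    (hxy : x * y = 1) (hyx : y * x = 1) {i : ℤ} (hc : c * zpow2 x y i ∈ A) : c ∈ A := by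
  let u : Bˣ := ⟨x, y, hxy, hyx⟩
  have hinv : zpow2 x y i * zpow2 x y (-i) = 1 := by
    change zpow2 (u : B) ↑u⁻¹ i * zpow2 (u : B) ↑u⁻¹ (-i) = 1
    rw [zpow2_units u, zpow2_units u, ← Units.val_mul, ← zpow_add, add_neg_cancel, zpow_zero,
      Units.val_one]
  simpa only [mul_assoc, hinv, mul_one] using A.mul_mem hc (zpow2_mem hx hy (-i))

end zpow2

namespace BAlg

variable {F : Type*} [Field F] (q : F) (s t : ℤ) (φ : LaurentPolynomial F)

local notation "E" => bgen q s t φ BGen.e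
local notation "Fg" => bgen q s t φ BGen.f
local notation "K" => bgen q s t φ BGen.k
local notation "K'" => bgen q s t φ BGen.kinv
local notation "Cs" => bgen q s t φ BGen.cs
local notation "Ct" => bgen q s t φ BGen.ct

theorem k_mul_kinv : K * K' = 1 := by
  have h := RingQuot.mkAlgHom_rel F (BRel.kkinv (q := q) (s := s) (t := t) (φ := φ))
  simp only [map_mul, map_one] at h
  exact h

theorem kinv_mul_k : K' * K = 1 := by
  have h := RingQuot.mkAlgHom_rel F (BRel.kinvk (q := q) (s := s) (t := t) (φ := φ))
  simp only [map_mul, map_one] at h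
  exact h

theorem f_mul_e :
    Fg * E = q ^ s • (Cs * zpow2 K K' s) + q ^ t • (Ct * zpow2 K K' t) + leval φ q K K' := by
  have h := RingQuot.mkAlgHom_rel F (BRel.fe (q := q) (s := s) (t := t) (φ := φ))
  simp only [map_add, map_smul, map_mul, map_zpow2, map_leval] at h
  exact h

theorem e_mul_f :
    E * Fg = q ^ (-s) • (Cs * zpow2 K K' s) + q ^ (-t) • (Ct * zpow2 K K' t)
      + leval φ q⁻¹ K K' := by
  have h := RingQuot.mkAlgHom_rel F (BRel.ef (q := q) (s := s) (t := t) (φ := φ))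
  simp only [map_add, map_smul, map_mul, map_zpow2, map_leval] at h
  exact h

theorem eq_top_of_forall_bgen_mem {A : Subalgebra F (BAlg q s t φ)}
    (h : ∀ g, bgen q s t φ g ∈ A) : A = ⊤ := by
  rw [eq_top_iff]
  rintro x -
  obtain ⟨y, rfl⟩ := RingQuot.mkAlgHom_surjective F (BRel q s t φ) x
  induction y using FreeAlgebra.induction with
  | grade0 r => rw [AlgHom.commutes]; exact A.algebraMap_mem r
  | grade1 g => exact h g
  | mul a b ha hb => rw [map_mul]; exact A.mul_mem ha hb
  | add a b ha hb => rw [map_add]; exact A.add_mem ha hb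

theorem cs_mem_and_ct_mem (hq0 : q ≠ 0) (hq : ∀ n : ℕ, 0 < n → q ^ n ≠ 1) (hst : s ≠ t)
    {A : Subalgebra F (BAlg q s t φ)} (hE : E ∈ A) (hF : Fg ∈ A) (hK : K ∈ A) (hK' : K' ∈ A) :
    Cs ∈ A ∧ Ct ∈ A := by
  have hFE : q ^ s • (Cs * zpow2 K K' s) + q ^ t • (Ct * zpow2 K K' t) ∈ A := by
    rw [eq_sub_of_add_eq (f_mul_e q s t φ).symm]
    exact A.sub_mem (A.mul_mem hF hE) (leval_mem hK hK' φ q)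
  have hEF : q ^ (-s) • (Cs * zpow2 K K' s) + q ^ (-t) • (Ct * zpow2 K K' t) ∈ A := by
    rw [eq_sub_of_add_eq (e_mul_f q s t φ).symm]
    exact A.sub_mem (A.mul_mem hE hF) (leval_mem hK hK' φ q⁻¹)
  obtain ⟨hCsK, hCtK⟩ := Submodule.mem_of_smul_add_smul_mem (p := Subalgebra.toSubmodule A)
    (zpow_mul_zpow_neg_sub_ne_zero hq0 hq hst) hFE hEF
  have hKK' := k_mul_kinv q s t φ
  have hK'K := kinv_mul_k q s t φ
  exact ⟨mem_of_mul_zpow2_mem hK hK' hKK' hK'K hCsK, mem_of_mul_zpow2_mem hK hK' hKK' hK'K hCtK⟩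

end BAlg

theorem stmt9_general {F : Type*} [Field F] (q : F) (hq0 : q ≠ 0)
    (hq : ∀ n : ℕ, 0 < n → q ^ n ≠ 1) (s t : ℤ) (hst : s ≠ t)
    (φ : LaurentPolynomial F) :
    Algebra.adjoin F
      {bgen q s t φ BGen.e, bgen q s t φ BGen.f, bgen q s t φ BGen.k,
        bgen q s t φ BGen.kinv} = ⊤ := by
  set A := Algebra.adjoin F
    {bgen q s t φ BGen.e, bgen q s t φ BGen.f, bgen q s t φ BGen.k, bgen q s t φ BGen.kinv}
  have hE : bgen q s t φ BGen.e ∈ A := Algebra.subset_adjoin (by simp)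
  have hF : bgen q s t φ BGen.f ∈ A := Algebra.subset_adjoin (by simp)
  have hK : bgen q s t φ BGen.k ∈ A := Algebra.subset_adjoin (by simp)
  have hK' : bgen q s t φ BGen.kinv ∈ A := Algebra.subset_adjoin (by simp)
  obtain ⟨hCs, hCt⟩ := BAlg.cs_mem_and_ct_mem q s t φ hq0 hq hst hE hF hK hK'
  refine BAlg.eq_top_of_forall_bgen_mem q s t φ fun g => ?_
  cases g
  exacts [hCs, hCt, hE, hF, hK, hK']

theorem stmt9 {F : Type*} [Field F] (q : F) (hq0 : q ≠ 0)
    (hq : ∀ n : ℕ, 0 < n → q ^ n ≠ 1) (s t : ℤ) (hst : s ≠ t)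
    (φ : LaurentPolynomial F) (hφ : φ.coeff s = 0 ∧ φ.coeff t = 0) :
    Algebra.adjoin F
      {bgen q s t φ BGen.e, bgen q s t φ BGen.f, bgen q s t φ BGen.k,
        bgen q s t φ BGen.kinv} = ⊤ :=
  stmt9_general q hq0 hq s t hst φ

end
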